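/- arXiv:0911.1361 — 2 statements merged into one kernel-verified Lean document; each statement's English description precedes it below -/
import Mathlib

section
/- If φ(x;y) is independent (has the independence property), then there is a model M, a set B in M, and a φ-type p over B such that no elementary φ-extension of p is φ-isolated. More precisely: if B is an infinite φ-independent set, then for any elementary extension (N;B') of the pair (M;B) and any extension p' of p to a φ-type with domain contained in B', p' is not φ-isolated. -/
/-! For each `n` and each sign pattern `ε`, the sentence "any `n` distinct elements of `P` are
shattered by `φ` according to `ε`" of the pair language holds in `(M; B)` because `B` is
φ-independent, hence in `(N; B')`; so every finite subset of `B'` is shattered by `φ` inside `N`.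
The domain `D` contains the infinite set `g(B)`, so a finite subtype of `p'` leaves out some
parameter `d ∈ D`, and a realization of that subtype with the sign at `d` flipped shows that it
does not imply `p'`. -/

open FirstOrder

universe u u' v w

namespace IET

/-- Bundled models of the complete theory of `M` (elementary-extension candidates). -/
abbrev MT (L : FirstOrder.Language.{v, w}) (M : Type u) [L.Structure M] :=
  Language.Theory.ModelType.{v, w, max u v w} (L.completeTheory M)

variable (L : FirstOrder.Language.{v, w}) (M : Type u) [L.Structure M]

/-- Consistency of a set of signed `φ`-instances with parameters in `M`:
simultaneous realization in some elementary extension of `M`. -/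
def Consistent (φ : L.Formula (Fin 2)) (X : Set (M × Bool)) : Prop :=
  ∃ (N : MT L M) (f : M ↪ₑ[L] N) (a : N),
    ∀ q ∈ X, (φ.Realize ![a, f q.1] ↔ q.2 = true)

/-- The set of signed instances `{φ(x;b)^(s b) : b ∈ B}`. -/
def typeSet (B : Set M) (s : M → Bool) : Set (M × Bool) :=
  {q | q.1 ∈ B ∧ s q.1 = q.2}

/-- `s` determines a (complete, consistent) φ-type over `B`. -/
def IsPhiType (φ : L.Formula (Fin 2)) (B : Set M) (s : M → Bool) : Prop :=
  Consistent L M φ (typeSet M B s)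

/-- `B` is φ-independent: every sign pattern over `B` is consistent. -/
def PhiIndep (φ : L.Formula (Fin 2)) (B : Set M) : Prop :=
  ∀ s : M → Bool, Consistent L M φ (typeSet M B s)

/-- The space `S_φ(B)` of complete φ-types over `B`. -/
def Sphi (φ : L.Formula (Fin 2)) (B : Set M) : Set (B → Bool) :=
  {s | Consistent L M φ {q | ∃ h : q.1 ∈ B, s ⟨q.1, h⟩ = q.2}}

/-- The set of signed instances `X₀` entails the set `X` (in every elementary
extension of `M`). -/
def EntailsIn (φ : L.Formula (Fin 2)) (X₀ X : Set (M × Bool)) : Prop :=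
  ∀ (N : MT L M) (f : M ↪ₑ[L] N) (a : N),
    (∀ q ∈ X₀, (φ.Realize ![a, f q.1] ↔ q.2 = true)) →
    ∀ q ∈ X, (φ.Realize ![a, f q.1] ↔ q.2 = true)

/-- A φ-type (given as a set of signed instances) is φ-isolated if some finite
subtype entails it. -/
def PhiIsolated (φ : L.Formula (Fin 2)) (X : Set (M × Bool)) : Prop :=
  ∃ X₀ ⊆ X, X₀.Finite ∧ EntailsIn L M φ X₀ X

/-- `φ` has independence dimension `n`: some φ-independent set of size `n` exists
in an elementary extension of `M`, and every φ-independent set in any elementary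
extension of `M` is finite of size at most `n`. -/
def HasID (φ : L.Formula (Fin 2)) (n : ℕ) : Prop :=
  (∃ (N : MT L M) (_ : M ↪ₑ[L] N) (B : Set N),
      B.Finite ∧ B.ncard = n ∧ PhiIndep L N φ B) ∧
    ∀ (N : MT L M) (_ : M ↪ₑ[L] N) (B : Set N),
      PhiIndep L N φ B → B.Finite ∧ B.ncard ≤ n

/-- A language with a single unary relation symbol `P`. -/
def unaryLang : FirstOrder.Language.{0, 0} :=
  ⟨fun _ => Empty, fun n => PLift (n = 1)⟩

/-- Interpret the unary predicate as membership in `B`. -/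
def unaryStr (B : Set M) : (unaryLang).Structure M where
  funMap := fun f _ => f.elim
  RelMap := fun r v => v (Fin.cast r.down.symm 0) ∈ B

/-- The pair structure `(M; B)` in the language `L ∪ {P}`. -/
def pairStr (B : Set M) : (L.sum unaryLang).Structure M :=
  @Language.sumStructure L unaryLang M _ (unaryStr M B)

/-- An elementary embedding of pairs `(M; B) ⪯ (N; B')` in the language `L ∪ {P}`. -/
def PairEmb (B : Set M) (N : Type u') [L.Structure N] (B' : Set N) : Type _ :=
  @FirstOrder.Language.ElementaryEmbedding (L.sum unaryLang) M N
    (pairStr L M B) (pairStr L N B')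

/-- The underlying map of an elementary embedding of pairs. -/
def pairFn {L₀ : FirstOrder.Language.{v, w}} {M₀ : Type u} [L₀.Structure M₀] {B : Set M₀}
    {N : Type u'} [L₀.Structure N] {B' : Set N}
    (g : PairEmb L₀ M₀ B N B') : M₀ → N :=
  @FirstOrder.Language.ElementaryEmbedding.toFun (L₀.sum unaryLang) M₀ N
    (pairStr L₀ M₀ B) (pairStr L₀ N B') g

open FirstOrder.Language

section Formulas

variable {L M}

theorem comp_vecCons_pair {α β : Type*} (f : α → β) (a b : α) : f ∘ ![a, b] = ![f a, f b] :=
  (FinVec.map_eq _ _).symm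

theorem realize_pair_elementaryEmbedding {N : Type*} [L.Structure N] (f : M ↪ₑ[L] N)
    (φ : L.Formula (Fin 2)) (a b : M) : φ.Realize ![f a, f b] ↔ φ.Realize ![a, b] := by
  rw [← f.map_formula φ ![a, b], comp_vecCons_pair]

def signedFormula {α : Type*} (ψ : L.Formula α) : Bool → L.Formula α
  | true => ψ
  | false => ψ.not

@[simp]
theorem realize_signedFormula {α : Type*} (ψ : L.Formula α) (b : Bool) (v : α → M) :
    (signedFormula ψ b).Realize v ↔ (ψ.Realize v ↔ b = true) := by
  cases b <;> simp [signedFormula]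

noncomputable def patternFormula (φ : L.Formula (Fin 2)) {n : ℕ} (ε : Fin n → Bool) :
    L.Formula (Fin n) :=
  Formula.iExs Unit <| Formula.iInf fun i =>
    signedFormula (φ.relabel ![Sum.inr (), Sum.inl i]) (ε i)

theorem realize_patternFormula (φ : L.Formula (Fin 2)) {n : ℕ} (ε : Fin n → Bool)
    (y : Fin n → M) :
    (patternFormula φ ε).Realize y ↔ ∃ a : M, ∀ i, (φ.Realize ![a, y i] ↔ ε i = true) := by
  simp only [patternFormula, Formula.realize_iExs, Formula.realize_iInf, realize_signedFormula,
    Formula.realize_relabel, comp_vecCons_pair, Sum.elim_inl, Sum.elim_inr]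
  exact ⟨fun ⟨w, hw⟩ => ⟨w (), hw⟩, fun ⟨a, ha⟩ => ⟨fun _ => a, ha⟩⟩

end Formulas

section Pairs

variable {L M}

def predP : (L.sum unaryLang).Relations 1 :=
  Sum.inr ⟨rfl⟩

noncomputable def distinctInPFormula (n : ℕ) : (L.sum unaryLang).Formula (Fin n) :=
  Formula.iInf (fun i => predP.formula ![Term.var i]) ⊓
    Formula.iInf fun p : {p : Fin n × Fin n // p.1 ≠ p.2} =>
      (Term.equal (Term.var p.1.1) (Term.var p.1.2)).not

theorem realize_distinctInPFormula (B : Set M) {n : ℕ} (y : Fin n → M) :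
    @Formula.Realize _ M (pairStr L M B) _ (distinctInPFormula n) y ↔
      (∀ i, y i ∈ B) ∧ Function.Injective y := by
  let := pairStr L M B
  simp only [distinctInPFormula, Formula.realize_inf, Formula.realize_iInf, Formula.realize_rel,
    Formula.realize_not, Formula.realize_equal, Term.realize_var]
  exact and_congr Iff.rfl
    ⟨fun h i j hij => by_contra fun hne => h ⟨(i, j), hne⟩ hij, fun h p => p.2 ∘ (h ·)⟩

noncomputable def indepSentence (φ : L.Formula (Fin 2)) {n : ℕ} (ε : Fin n → Bool) :
    (L.sum unaryLang).Sentence :=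
  Formula.iAlls (Fin n) <| Formula.relabel Sum.inr <|
    (distinctInPFormula n).imp (LHom.sumInl.onFormula (patternFormula φ ε))

theorem realize_indepSentence (B : Set M) (φ : L.Formula (Fin 2)) {n : ℕ} (ε : Fin n → Bool) :
    @Sentence.Realize _ M (pairStr L M B) (indepSentence φ ε) ↔
      ∀ y : Fin n → M, (∀ i, y i ∈ B) → Function.Injective y →
        ∃ a : M, ∀ i, (φ.Realize ![a, y i] ↔ ε i = true) := by
  let := unaryStr M B
  -- unfold `pairStr` so that the `IsExpansionOn` instance of `LHom.sumInl` is found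
  change @Sentence.Realize _ M (Language.sumStructure L unaryLang M) _ ↔ _
  simp only [indepSentence, Sentence.Realize, Formula.realize_iAlls, Formula.realize_relabel,
    Formula.realize_imp, LHom.realize_onFormula, realize_patternFormula, Sum.elim_comp_inr]
  exact forall_congr' fun y => by
    rw [← and_imp]
    exact imp_congr_left (realize_distinctInPFormula B y)

end Pairs

section Shattering

variable {L M} {φ : L.Formula (Fin 2)}

def FinitelyShattered (φ : L.Formula (Fin 2)) (D : Set M) : Prop :=
  ∀ F ⊆ D, F.Finite → ∀ t : M → Bool, ∃ a : M, ∀ x ∈ F, (φ.Realize ![a, x] ↔ t x = true)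

theorem FinitelyShattered.mono {D D' : Set M} (h : FinitelyShattered φ D') (hD : D ⊆ D') :
    FinitelyShattered φ D :=
  fun F hF => h F (hF.trans hD)

theorem finitelyShattered_of_realize_indepSentence {B : Set M}
    (h : ∀ (n : ℕ) (ε : Fin n → Bool),
      @Sentence.Realize _ M (pairStr L M B) (indepSentence φ ε)) :
    FinitelyShattered φ B := by
  intro F hFB hF t
  have := hF.to_subtype
  let y : Fin (Nat.card F) → M := Subtype.val ∘ (Finite.equivFin F).symm
  obtain ⟨a, ha⟩ := (realize_indepSentence B φ _).1 (h _ (t ∘ y)) y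
    (fun i => hFB ((Finite.equivFin F).symm i).2) (Subtype.val_injective.comp (Equiv.injective _))
  refine ⟨a, fun x hx => ?_⟩
  have hx' := ha (Finite.equivFin F ⟨x, hx⟩)
  simp only [y, Function.comp_apply, Equiv.symm_apply_apply] at hx'
  exact hx'

theorem PhiIndep.models_indepSentence {B : Set M}
    (hind : PhiIndep L M φ B) {n : ℕ} (ε : Fin n → Bool) :
    @Sentence.Realize _ M (pairStr L M B) (indepSentence φ ε) := by
  refine (realize_indepSentence B φ ε).2 fun y hyB hy => ?_
  obtain ⟨N, f, a, ha⟩ := hind (Function.extend y ε fun _ => true)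
  have hN : (patternFormula φ ε).Realize (f ∘ y) :=
    (realize_patternFormula φ ε _).2 ⟨a, fun i => ha (y i, ε i) ⟨hyB i, hy.extend_apply ..⟩⟩
  exact (realize_patternFormula φ ε y).1 ((f.map_formula _ y).1 hN)

theorem PhiIndep.finitelyShattered_of_pairEmb {B : Set M}
    (hind : PhiIndep L M φ B) {N : Type u'} [L.Structure N] {B' : Set N}
    (g : PairEmb L M B N B') : FinitelyShattered φ B' :=
  finitelyShattered_of_realize_indepSentence fun _ ε =>
    (@ElementaryEmbedding.map_sentence _ M N (pairStr L M B) (pairStr L N B') g _).1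
      (hind.models_indepSentence ε)

theorem FinitelyShattered.not_phiIsolated {D : Set M} (h : FinitelyShattered φ D)
    (hD : D.Infinite) {N : MT L M} (f : M ↪ₑ[L] N) (s : M → Bool) :
    ¬ PhiIsolated L M φ (typeSet M D s) := by
  classical
  rintro ⟨X₀, hX₀, hfin, hent⟩
  -- Flipping the sign at a parameter `d` not mentioned in `X₀` realizes `X₀` but not the type.
  obtain ⟨d, hdD, hd⟩ := hD.exists_notMem_finite (hfin.image Prod.fst)
  have hX₀D : Prod.fst '' X₀ ⊆ D := by
    rintro _ ⟨q, hq, rfl⟩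
    exact (hX₀ hq).1
  obtain ⟨a, ha⟩ := h _ (Set.insert_subset hdD hX₀D) ((hfin.image _).insert d)
    (Function.update s d !s d)
  have hflip := hent N f (f a) (fun q hq => ?_) (d, s d) ⟨hdD, rfl⟩
  · rw [realize_pair_elementaryEmbedding, ha d (Set.mem_insert _ _)] at hflip
    simp at hflip
  · have hqd : q.1 ≠ d := fun hqd => hd ⟨q, hq, hqd⟩
    rw [realize_pair_elementaryEmbedding, ha q.1 (Set.mem_insert_of_mem _ ⟨q, hq, rfl⟩),
      Function.update_of_ne hqd, (hX₀ hq).2]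

end Shattering

theorem no_isolated_extension_of_independent (φ : L.Formula (Fin 2)) (B : Set M)
    (hinf : B.Infinite) (hind : PhiIndep L M φ B)
    (p : M → Bool)
    (N : Type u') [L.Structure N] (B' : Set N) (g : PairEmb L M B N B')
    (D : Set N) (s' : N → Bool) (hD : D ⊆ B')
    (hext : ∀ b ∈ B, pairFn g b ∈ D ∧ s' (pairFn g b) = p b)
    (htype : IsPhiType L N φ D s') :
    ¬ PhiIsolated L N φ (typeSet N D s') := by
  obtain ⟨N₁, f, -⟩ := htype
  have hgB : pairFn g '' B ⊆ D := Set.image_subset_iff.2 fun b hb => (hext b hb).1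
  have hg : Function.Injective (pairFn g) :=
    @ElementaryEmbedding.injective _ M N (pairStr L M B) (pairStr L N B') g
  have hDinf : D.Infinite := (hinf.image hg.injOn).mono hgB
  exact ((hind.finitelyShattered_of_pairEmb g).mono hD).not_phiIsolated hDinf f s'
end IET
end

section
/- Let T be the theory of an equivalence relation E with infinitely many classes, each infinite, and let φ(x;y,z,w) = (z = w → x = y) ∧ (z ≠ w → E(x,y)). Then for every n, there exist a model M, a set B ⊆ M, and a φ-type p_n over B such that for any elementary extension (N;B') ⪰ (M;B), every φ-isolated φ-extension p' of p_n with dom(p') ⊆ B' requires an isolating finite subtype of size at least n. Consequently, there is no uniform bound on the size of φ-isolating subtypes in Theorem 2.5, even for stable φ. -/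
open FirstOrder

universe u u' v w

namespace IET

variable (L : FirstOrder.Language.{v, w}) (M : Type u) [L.Structure M]

/-- Consistency for partitioned formulas `φ(x̄; ȳ)` of tuple variables. -/
def ConsistentT {k l : ℕ} (φ : L.Formula (Fin k ⊕ Fin l))
    (X : Set ((Fin l → M) × Bool)) : Prop :=
  ∃ (N : MT L M) (f : M ↪ₑ[L] N) (a : Fin k → N),
    ∀ q ∈ X, (φ.Realize (Sum.elim a (fun i => f (q.1 i))) ↔ q.2 = true)

/-- The set of signed instances `{φ(x̄; b̄)^(s b̄) : b̄ ∈ D}`. -/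
def typeSetT {l : ℕ} (D : Set (Fin l → M)) (s : (Fin l → M) → Bool) :
    Set ((Fin l → M) × Bool) :=
  {q | q.1 ∈ D ∧ s q.1 = q.2}

/-- `s` determines a complete consistent φ-type over `D`. -/
def IsPhiTypeT {k l : ℕ} (φ : L.Formula (Fin k ⊕ Fin l)) (D : Set (Fin l → M))
    (s : (Fin l → M) → Bool) : Prop :=
  ConsistentT L M φ (typeSetT M D s)

/-- `D` is φ-independent. -/
def PhiIndepT {k l : ℕ} (φ : L.Formula (Fin k ⊕ Fin l)) (D : Set (Fin l → M)) : Prop :=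
  ∀ s : (Fin l → M) → Bool, ConsistentT L M φ (typeSetT M D s)

/-- Independence dimension for partitioned tuple formulas. -/
def HasIDT {k l : ℕ} (φ : L.Formula (Fin k ⊕ Fin l)) (n : ℕ) : Prop :=
  (∃ (N : MT L M) (_ : M ↪ₑ[L] N) (D : Set (Fin l → N)),
      D.Finite ∧ D.ncard = n ∧ PhiIndepT L N φ D) ∧
    ∀ (N : MT L M) (_ : M ↪ₑ[L] N) (D : Set (Fin l → N)),
      PhiIndepT L N φ D → D.Finite ∧ D.ncard ≤ n

/-- Entailment between sets of signed tuple instances. -/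
def EntailsT {k l : ℕ} (φ : L.Formula (Fin k ⊕ Fin l))
    (X₀ X : Set ((Fin l → M) × Bool)) : Prop :=
  ∀ (N : MT L M) (f : M ↪ₑ[L] N) (a : Fin k → N),
    (∀ q ∈ X₀, (φ.Realize (Sum.elim a (fun i => f (q.1 i))) ↔ q.2 = true)) →
    ∀ q ∈ X, (φ.Realize (Sum.elim a (fun i => f (q.1 i))) ↔ q.2 = true)

/-- φ-isolation for tuple φ-types. -/
def PhiIsolatedT {k l : ℕ} (φ : L.Formula (Fin k ⊕ Fin l))
    (X : Set ((Fin l → M) × Bool)) : Prop :=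
  ∃ X₀ ⊆ X, X₀.Finite ∧ EntailsT L M φ X₀ X

/-- The language with a single binary relation `E`. -/
def langE : FirstOrder.Language.{0, 0} :=
  ⟨fun _ => Empty, fun n => PLift (n = 2)⟩

/-- The interpretation of the relation `E`. -/
def Erel {X : Type u} [inst : langE.Structure X] (a b : X) : Prop :=
  @Language.Structure.RelMap langE X inst 2 (PLift.up rfl) ![a, b]

/-- `X` is a model of the theory of an equivalence relation with infinitely many
classes, all infinite. -/
def EqvModel (X : Type u) [langE.Structure X] : Prop :=
  Equivalence (fun a b : X => Erel a b) ∧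
  {s : Set X | ∃ a : X, s = {b | Erel a b}}.Infinite ∧
  ∀ a : X, {b : X | Erel a b}.Infinite

/-- The formula `φ(x; y, z, w) = (z = w → x = y) ∧ (z ≠ w → E(x, y))`. -/
def phiE : langE.Formula (Fin 1 ⊕ Fin 3) :=
  (Language.Term.equal (Language.Term.var (Sum.inr 1)) (Language.Term.var (Sum.inr 2)) ⟹
      Language.Term.equal (Language.Term.var (Sum.inl 0)) (Language.Term.var (Sum.inr 0))) ⊓
  (Language.BoundedFormula.not
      (Language.Term.equal (Language.Term.var (Sum.inr 1)) (Language.Term.var (Sum.inr 2))) ⟹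
    Language.Relations.formula (PLift.up rfl : langE.Relations 2)
      ![Language.Term.var (Sum.inl 0), Language.Term.var (Sum.inr 0)])

/-- A bundled `langE`-structure. -/
structure EqvStruct : Type (u + 1) where
  carrier : Type u
  [str : langE.Structure carrier]

attribute [instance] EqvStruct.str

instance : CoeSort EqvStruct.{u} (Type u) := ⟨EqvStruct.carrier⟩

/-! In `ℕ × ℤ` with `E` the equality of first coordinates, let `B` contain `k` points of the
`k`-th class, and let `p_n` be the φ-type over `B` of a point `a ∉ B` of the `n`-th class: it says
`x ≠ b` for every `b ∈ B`, and `E(x, b)` exactly for the `n` points `c_i` of `B` in that class.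
In an elementary extension `(N; B')` the class of the `c_i` still meets `B'` only in the `c_i`, so
a φ-extension of `p_n` over `B'` still says `x ≠ b` for all `b ∈ B'`, and says `E(x, b)`
exactly when `b` is in the class of the `c_i`. Hence a subtype with fewer than `n` instances leaves
some `c_i` out of all its `x = y` instances, so `c_i` realizes it, but `c_i` fails `x ≠ c_i`. -/

section Semantics
open Language

variable {X : Type*} [langE.Structure X]

lemma realize_phiE (a : Fin 1 → X) (w : Fin 3 → X) :
    phiE.Realize (Sum.elim a w) ↔
      (w 1 = w 2 → a 0 = w 0) ∧ (w 1 ≠ w 2 → Erel (a 0) (w 0)) := by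
  simp only [phiE, Formula.Realize, Term.equal, Relations.formula, BoundedFormula.realize_inf,
    BoundedFormula.realize_imp, BoundedFormula.realize_not, BoundedFormula.realize_bdEqual]
  refine and_congr Iff.rfl (imp_congr Iff.rfl
    (BoundedFormula.realize_rel.trans (iff_of_eq (congrArg _ ?_))))
  funext i
  fin_cases i <;> rfl

lemma realize_phiE_of_eq (a : Fin 1 → X) {w : Fin 3 → X} (hw : w 1 = w 2) :
    phiE.Realize (Sum.elim a w) ↔ a 0 = w 0 := by
  simp [realize_phiE, hw]

lemma realize_phiE_of_ne (a : Fin 1 → X) {w : Fin 3 → X} (hw : w 1 ≠ w 2) :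
    phiE.Realize (Sum.elim a w) ↔ Erel (a 0) (w 0) := by
  simp [realize_phiE, hw]

end Semantics

lemma equivalence_relMap_of_elementaryEmbedding {L : Language} {M N : Type*} [L.Structure M]
    [L.Structure N] (f : M ↪ₑ[L] N) {r : L.Relations 2}
    (h : Equivalence fun x y : M => Language.Structure.RelMap r ![x, y]) :
    Equivalence fun x y : N => Language.Structure.RelMap r ![x, y] := by
  have hrefl := (f.map_sentence r.reflexive).1 (Language.Relations.realize_reflexive.2 ⟨h.refl⟩)
  have hsymm := (f.map_sentence r.symmetric).1
    (Language.Relations.realize_symmetric.2 ⟨fun _ _ => h.symm⟩)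
  have htrans := (f.map_sentence r.transitive).1
    (Language.Relations.realize_transitive.2 ⟨fun _ _ _ => h.trans⟩)
  rw [Language.Relations.realize_reflexive] at hrefl
  rw [Language.Relations.realize_symmetric] at hsymm
  rw [Language.Relations.realize_transitive] at htrans
  exact ⟨hrefl.refl, hsymm.symm _ _, htrans.trans _ _ _⟩

lemma exists_notMem_image_of_ncard_lt {α β : Type*} {S : Set β} (hS : S.Finite) (k : β → α)
    {n : ℕ} {c : Fin n → α} (hc : Function.Injective c) (hlt : S.ncard < n) :
    ∃ i, c i ∉ k '' S := by
  by_contra! h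
  have hsub : Set.range c ⊆ k '' S := Set.range_subset_iff.2 h
  have := (Set.ncard_le_ncard hsub (hS.image k)).trans (Set.ncard_image_le hS)
  rw [Set.ncard_range_of_injective hc, Nat.card_eq_fintype_card, Fintype.card_fin] at this
  omega

section Pair
open Language

def PairEmb.reduct {L : FirstOrder.Language.{v, w}} {M : Type u} [L.Structure M] {B : Set M}
    {N : Type u'} [L.Structure N] {B' : Set N} (g : PairEmb L M B N B') : M ↪ₑ[L] N where
  toFun := pairFn g
  map_formula' n φ x := by
    let := unaryStr M B
    let := unaryStr N B'
    have h := (g : M ↪ₑ[L.sum unaryLang] N).map_formula (LHom.sumInl.onFormula φ) x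
    let ι : L →ᴸ L.sum unaryLang := LHom.sumInl
    exact (ι.realize_onFormula (M := N) φ).symm.trans (h.trans (ι.realize_onFormula (M := M) φ))

noncomputable def coveredFormula (n : ℕ) : (langE.sum unaryLang).Formula (Fin n) :=
  ∀' (Relations.boundedFormula₁ (Sum.inr (PLift.up rfl)) &0 ⟹
    (BoundedFormula.iSup fun i =>
      Relations.boundedFormula₂ (Sum.inl (PLift.up rfl)) &0 (var (Sum.inl i))) ⟹
    BoundedFormula.iSup fun i => (&0).bdEqual (var (Sum.inl i)))

lemma realize_coveredFormula {X : Type*} [langE.Structure X] [unaryLang.Structure X] {n : ℕ}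
    (c : Fin n → X) :
    (coveredFormula n).Realize c ↔
      ∀ x, Structure.RelMap (L := unaryLang) (PLift.up rfl) ![x] →
        (∃ i, Erel x (c i)) → ∃ i, x = c i := by
  simp only [coveredFormula, Formula.Realize, BoundedFormula.realize_all,
    BoundedFormula.realize_imp, BoundedFormula.realize_iSup, BoundedFormula.realize_bdEqual,
    Term.realize_var]
  exact forall_congr' fun x => imp_congr BoundedFormula.realize_rel₁
    (imp_congr (exists_congr fun i => BoundedFormula.realize_rel₂) Iff.rfl)

lemma PairEmb.covered {M : Type u} [langE.Structure M] {B : Set M} {N : Type u'}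
    [langE.Structure N] {B' : Set N} (g : PairEmb langE M B N B') {n : ℕ} {c : Fin n → M}
    (hc : ∀ x ∈ B, (∃ i, Erel x (c i)) → ∃ i, x = c i) :
    ∀ x ∈ B', (∃ i, Erel x (pairFn g (c i))) → ∃ i, x = pairFn g (c i) := by
  let := unaryStr M B
  let := unaryStr N B'
  have h := ((g : M ↪ₑ[langE.sum unaryLang] N).map_formula (coveredFormula n) c).2
    ((realize_coveredFormula c).2 hc)
  exact (realize_coveredFormula _).1 h

end Pair

lemma erel_map {X Y : Type*} [langE.Structure X] [langE.Structure Y] (f : X ↪ₑ[langE] Y)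
    (x y : X) : Erel (f x) (f y) ↔ Erel x y := by
  refine Iff.trans ?_ (f.map_rel (L := langE) (PLift.up rfl) ![x, y])
  refine iff_of_eq (congrArg (Language.Structure.RelMap _) ?_)
  ext i
  fin_cases i <;> rfl

section Isolation

variable {N Y : Type*} [langE.Structure N] [langE.Structure Y] (f : N ↪ₑ[langE] Y)
  {D : Set (Fin 3 → N)} {s' : (Fin 3 → N) → Bool} {a : Fin 1 → Y}

lemma erel_of_realize (ha : ∀ v ∈ D, phiE.Realize (Sum.elim a (f ∘ v)) ↔ s' v = true)
    {v : Fin 3 → N} (hv : v ∈ D) (hne : v 1 ≠ v 2) (hs : s' v = true) : Erel (a 0) (f (v 0)) :=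
  (realize_phiE_of_ne a (f.injective.ne hne)).1 ((ha v hv).2 hs)

lemma ne_of_realize (ha : ∀ v ∈ D, phiE.Realize (Sum.elim a (f ∘ v)) ↔ s' v = true)
    {x : N} (hx : (fun _ => x) ∈ D) (hs : s' (fun _ => x) = false) : a 0 ≠ f x := by
  intro h
  have h' := (ha _ hx).1 ((realize_phiE_of_eq a (w := f ∘ fun _ => x) rfl).2 h)
  exact Bool.false_ne_true (hs ▸ h')

lemma eq_false_of_realize (ha : ∀ v ∈ D, phiE.Realize (Sum.elim a (f ∘ v)) ↔ s' v = true)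
    {B' : Set N} (hD : D ⊆ {v | ∀ i, v i ∈ B'}) {n : ℕ} {c : Fin n → N}
    (hcov : ∀ x ∈ B', (∃ i, Erel x (c i)) → ∃ i, x = c i)
    (hE : ∀ i, Erel (a 0) (f (c i))) (hne : ∀ i, a 0 ≠ f (c i)) (i₀ : Fin n)
    {v : Fin 3 → N} (hv : v ∈ D) (h12 : v 1 = v 2) : s' v = false := by
  by_contra hs
  have hav : a 0 = f (v 0) :=
    (realize_phiE_of_eq a (congrArg f h12)).1 ((ha v hv).2 (Bool.not_eq_false _ ▸ hs))
  have hclass : Erel (v 0) (c i₀) := (erel_map f _ _).1 (hav ▸ hE i₀)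
  obtain ⟨j, hj⟩ := hcov (v 0) (hD hv 0) ⟨i₀, hclass⟩
  exact hne j (hj ▸ hav)

lemma realize_of_erel (ha : ∀ v ∈ D, phiE.Realize (Sum.elim a (f ∘ v)) ↔ s' v = true)
    (hY : Equivalence (@Erel Y _)) (hneg : ∀ v ∈ D, v 1 = v 2 → s' v = false)
    {x : N} (hx : Erel (a 0) (f x)) {v : Fin 3 → N} (hv : v ∈ D) (hv0 : v 0 ≠ x) :
    phiE.Realize (Sum.elim (fun _ => f x) (f ∘ v)) ↔ s' v = true := by
  by_cases h12 : v 1 = v 2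
  · rw [realize_phiE_of_eq _ (congrArg f h12), hneg v hv h12]
    simpa using (f.injective.ne hv0).symm
  · rw [← ha v hv, realize_phiE_of_ne _ (f.injective.ne h12),
      realize_phiE_of_ne _ (f.injective.ne h12)]
    exact ⟨hY.trans hx, hY.trans (hY.symm hx)⟩

end Isolation

/-- If `B'` meets the `E`-classes of `n` distinct points `c i` only in these points, and the
φ-type `s'` over `D ⊆ B'³` says `x ≠ c i` and `E(x, c i)` for every `i`, then each of its
isolating subtypes has at least `n` instances. -/
lemma le_ncard_of_entailsT {N : Type*} [langE.Structure N] (hN : Equivalence (@Erel N _))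
    {B' : Set N} {D : Set (Fin 3 → N)} {s' : (Fin 3 → N) → Bool}
    (hD : D ⊆ {v | ∀ i, v i ∈ B'}) (htype : IsPhiTypeT langE N phiE D s')
    {n : ℕ} {c : Fin n → N} (hc : Function.Injective c)
    (hcov : ∀ x ∈ B', (∃ i, Erel x (c i)) → ∃ i, x = c i)
    (hdiag : ∀ i, (fun _ => c i) ∈ D ∧ s' (fun _ => c i) = false)
    (hclass : ∀ i, ∃ w ∈ D, w 0 = c i ∧ w 1 ≠ w 2 ∧ s' w = true)
    {X₀ : Set ((Fin 3 → N) × Bool)} (hX₀ : X₀ ⊆ typeSetT N D s') (hfin : X₀.Finite)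
    (hent : EntailsT langE N phiE X₀ (typeSetT N D s')) :
    n ≤ X₀.ncard := by
  obtain ⟨N₁, f, a, ha'⟩ := htype
  have ha : ∀ v ∈ D, phiE.Realize (Sum.elim a (f ∘ v)) ↔ s' v = true :=
    fun v hv => ha' ⟨v, s' v⟩ ⟨hv, rfl⟩
  have hN₁ := equivalence_relMap_of_elementaryEmbedding f hN
  have hE : ∀ i, Erel (a 0) (f (c i)) := fun i => by
    obtain ⟨w, hw, hw0, h12, hs⟩ := hclass i
    exact hw0 ▸ erel_of_realize f ha hw h12 hs
  have hne : ∀ i, a 0 ≠ f (c i) := fun i => ne_of_realize f ha (hdiag i).1 (hdiag i).2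
  by_contra! hlt
  obtain ⟨i₀, hi₀⟩ := exists_notMem_image_of_ncard_lt hfin (fun q => q.1 0) hc hlt
  have hneg := fun v => eq_false_of_realize f ha hD hcov hE hne i₀ (v := v)
  have hreal : ∀ q ∈ X₀, phiE.Realize (Sum.elim (fun _ => f (c i₀)) (f ∘ q.1)) ↔ q.2 = true := by
    intro q hq
    obtain ⟨hqD, hqs⟩ := hX₀ hq
    rw [← hqs]
    exact realize_of_erel f ha hN₁ hneg (hE i₀) hqD fun h => hi₀ ⟨q, hq, h⟩
  have hdiag₀ := hent N₁ f _ hreal ⟨fun _ => c i₀, false⟩ (hdiag i₀)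
  exact Bool.false_ne_true (hdiag₀.1 ((realize_phiE_of_eq _ rfl).2 rfl))

instance : langE.Structure (ULift.{u} (ℕ × ℤ)) where
  funMap f := f.elim
  RelMap r v := (v (Fin.cast r.down.symm 0)).down.1 = (v (Fin.cast r.down.symm 1)).down.1

abbrev classModel : EqvStruct.{u} := ⟨ULift.{u} (ℕ × ℤ)⟩

lemma eqvModel_classModel : EqvModel classModel.{u} := by
  refine ⟨⟨fun _ => rfl, Eq.symm, Eq.trans⟩, ?_, fun x => ?_⟩
  · refine Set.infinite_of_injective_forall_mem
      (f := fun k : ℕ => {y : classModel.{u} | Erel ⟨(k, 0)⟩ y}) (fun k l h => ?_) fun _ => ⟨_, rfl⟩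
    exact (Set.ext_iff.1 h ⟨(l, 0)⟩).2 rfl
  · exact Set.infinite_of_injective_forall_mem
      (f := fun i : ℤ => (⟨(x.down.1, i)⟩ : classModel.{u})) (fun i j h => by simpa using h)
      fun _ => rfl

def prefixSet : Set classModel.{u} := {x | 0 ≤ x.down.2 ∧ x.down.2 < x.down.1}

/-- The φ-type `p_n` over `prefixSet` of a point of the class `n` outside `prefixSet`. -/
def classType (n : ℕ) (v : Fin 3 → classModel.{u}) : Bool :=
  if v 1 = v 2 then false else decide ((v 0).down.1 = n)

def classPoint (n : ℕ) (i : Fin n) : classModel.{u} := ⟨(n, i)⟩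

lemma classPoint_injective (n : ℕ) : Function.Injective (classPoint.{u} n) := by
  intro i j h
  exact Fin.ext (by simpa [classPoint] using h)

lemma classPoint_mem_prefixSet (n : ℕ) (i : Fin n) : classPoint.{u} n i ∈ prefixSet :=
  ⟨by simp [classPoint], by simp [classPoint]⟩

lemma classType_const (n : ℕ) (x : classModel.{u}) : classType n (fun _ => x) = false :=
  if_pos rfl

lemma exists_classType_eq_true (n : ℕ) (i : Fin n) :
    ∃ v : Fin 3 → classModel.{u}, (∀ j, v j ∈ prefixSet) ∧ v 0 = classPoint n i ∧ v 1 ≠ v 2 ∧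
      classType n v = true := by
  have h12 : classPoint.{u} 1 0 ≠ classPoint 2 0 := by simp [classPoint]
  refine ⟨![classPoint n i, classPoint 1 0, classPoint 2 0], fun j => ?_, rfl, h12, ?_⟩
  · fin_cases j <;> exact classPoint_mem_prefixSet _ _
  · simp [classType, classPoint]

lemma prefixSet_covered (n : ℕ) :
    ∀ x ∈ prefixSet.{u}, (∃ i, Erel x (classPoint n i)) → ∃ i, x = classPoint n i := by
  rintro ⟨k, j⟩ ⟨hj₀, hjk⟩ ⟨i, hi⟩
  dsimp only at hj₀ hjk
  obtain rfl : k = n := hi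
  exact ⟨⟨j.toNat, by omega⟩, by simp [classPoint, Int.toNat_of_nonneg hj₀]⟩

/-- Shifting the class `n` up by one moves `prefixSet` off `(n, 0)` and fixes every class. -/
def shiftClass (n : ℕ) : classModel.{u} ≃[langE] classModel.{u} where
  toFun x := ⟨(x.down.1, if x.down.1 = n then x.down.2 + 1 else x.down.2)⟩
  invFun x := ⟨(x.down.1, if x.down.1 = n then x.down.2 - 1 else x.down.2)⟩
  left_inv := by rintro ⟨k, i⟩; by_cases h : k = n <;> simp [h]
  right_inv := by rintro ⟨k, i⟩; by_cases h : k = n <;> simp [h]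
  map_fun' f := f.elim
  map_rel' := by
    rintro _ ⟨rfl⟩ _
    exact Iff.rfl

lemma isPhiTypeT_classType (n : ℕ) :
    IsPhiTypeT langE classModel.{u} phiE {v | ∀ i, v i ∈ prefixSet} (classType n) := by
  refine ⟨Language.Theory.ModelType.of _ classModel.{u}, (shiftClass n).toElementaryEmbedding,
    fun _ => ⟨(n, 0)⟩, ?_⟩
  rintro ⟨v, b⟩ ⟨hv, hb⟩
  dsimp only at hv hb ⊢
  subst hb
  by_cases h12 : v 1 = v 2
  · erw [realize_phiE_of_eq _ (congrArg (shiftClass n) h12)]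
    obtain ⟨hv₀, -⟩ := hv 0
    simp only [classType, h12, if_true, Bool.false_eq_true, iff_false]
    intro h
    have h₁ : n = (v 0).down.1 := congrArg (fun x : classModel.{u} => x.down.1) h
    have h₂ : (0 : ℤ) = if (v 0).down.1 = n then (v 0).down.2 + 1 else (v 0).down.2 :=
      congrArg (fun x : classModel.{u} => x.down.2) h
    rw [if_pos h₁.symm] at h₂
    omega
  · erw [realize_phiE_of_ne _ ((shiftClass n).injective.ne h12)]
    simp only [classType, h12, if_false, decide_eq_true_eq]
    exact eq_comm

/-- in the theory of an equivalence relation with infinitely many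
infinite classes, with `φ(x; y,z,w) = (z = w → x = y) ∧ (z ≠ w → E(x,y))`, for every
`n` there are a model, a set `B` and a φ-type `p_n` over `B` such that for every
elementary pair extension `(N; B')`, every φ-isolated φ-extension of `p_n` with
domain contained in `B'` needs an isolating finite subtype of size at least `n`. -/
theorem no_uniform_bound_on_isolating_subtypes (n : ℕ) :
    ∃ (M₀ : EqvStruct.{u}) (B : Set M₀) (s : (Fin 3 → M₀) → Bool),
      EqvModel M₀ ∧
      IsPhiTypeT langE M₀ phiE {v | ∀ i, v i ∈ B} s ∧
      ∀ (N : EqvStruct.{u'}) (B' : Set N) (g : PairEmb langE M₀ B N B')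
        (D : Set (Fin 3 → N)) (s' : (Fin 3 → N) → Bool),
        D ⊆ {v | ∀ i, v i ∈ B'} →
        (∀ v : Fin 3 → M₀, (∀ i, v i ∈ B) →
          ((fun i => pairFn g (v i)) ∈ D ∧ s' (fun i => pairFn g (v i)) = s v)) →
        IsPhiTypeT langE N phiE D s' →
        ∀ X₀ ⊆ typeSetT N D s', X₀.Finite →
          EntailsT langE N phiE X₀ (typeSetT N D s') →
          n ≤ X₀.ncard := by
  refine ⟨classModel, prefixSet, classType n, eqvModel_classModel, isPhiTypeT_classType n, ?_⟩
  intro N B' g D s' hD hext htype X₀ hX₀ hfin hent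
  have hN := equivalence_relMap_of_elementaryEmbedding g.reduct eqvModel_classModel.1
  have hdiag (i : Fin n) :
      (fun _ => pairFn g (classPoint n i)) ∈ D ∧ s' (fun _ => pairFn g (classPoint n i)) = false :=
    let h := hext (fun _ => classPoint n i) fun _ => classPoint_mem_prefixSet n i
    ⟨h.1, h.2.trans (classType_const n _)⟩
  have hclass (i : Fin n) :
      ∃ w ∈ D, w 0 = pairFn g (classPoint n i) ∧ w 1 ≠ w 2 ∧ s' w = true := by
    obtain ⟨v, hv, hv0, h12, hs⟩ := exists_classType_eq_true n i
    exact ⟨_, (hext v hv).1, congrArg _ hv0, g.reduct.injective.ne h12, (hext v hv).2.trans hs⟩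
  exact le_ncard_of_entailsT hN hD htype (g.reduct.injective.comp (classPoint_injective n))
    (g.covered (prefixSet_covered n)) hdiag hclass hX₀ hfin hent

end IET
end
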